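/- Consider the transportation polytope P with m = 3 suppliers and n = 3 customers and supply and demand vectors u = v = (1, 2, 2)ᵀ. Then the point x = (x₁₁, x₁₂, x₁₃, x₂₁, x₂₂, x₂₃, x₃₁, x₃₂, x₃₃)ᵀ = (0,1,0,1,0,1,0,1,1)ᵀ is a vertex of P, the vector g = (1,−1,0,−1,1,0,0,0,0)ᵀ is a circuit of P, the maximal step size from x along g is α = 1, and x + g ∈ P is not a vertex of P. In particular, there exists a transportation polytope in which every circuit walk is integral but not every circuit walk is a vertex walk. -/

import Mathlib

/-!
STATEMENT 18: In the 3×3 transportation polytope with u = v = (1,2,2)ᵀ, the point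
x = (0,1,0,1,0,1,0,1,1)ᵀ is a vertex, g = (1,-1,0,-1,1,0,0,0,0)ᵀ is a circuit, the maximal
step size from x along g is α = 1, and x + g ∈ P is not a vertex.  In particular, there is a
transportation polytope in which every circuit walk is integral but not every circuit walk is
a vertex walk.
-/

/-- The transportation polytope with supplies `u` and demands `v`. -/
def TransportationPolytope {m n : ℕ} (u : Fin m → ℕ) (v : Fin n → ℕ) :
    Set (Fin m × Fin n → ℝ) :=
  {y | (∀ i, ∑ j, y (i, j) = (u i : ℝ)) ∧
       (∀ j, ∑ i, y (i, j) = (v j : ℝ)) ∧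
       ∀ p, 0 ≤ y p}

/-- `g` is a circuit of the constraint system defining the transportation polytope: a nonzero
kernel element of the equality constraints with coprime integer components such that `B g` is
support-minimal, where `B` collects the nonnegativity constraints. -/
def IsCircuitTP {m n : ℕ} (g : Fin m × Fin n → ℝ) : Prop :=
  (∀ i, ∑ j, g (i, j) = 0) ∧ (∀ j, ∑ i, g (i, j) = 0) ∧ g ≠ 0 ∧
  (∃ gz : Fin m × Fin n → ℤ, (∀ p, g p = (gz p : ℝ)) ∧ Finset.univ.gcd gz = 1) ∧
  ¬ ∃ y : Fin m × Fin n → ℝ,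
      (∀ i, ∑ j, y (i, j) = 0) ∧ (∀ j, ∑ i, y (i, j) = 0) ∧ y ≠ 0 ∧
      {p | -(y p) ≠ 0} ⊂ {p | -(g p) ≠ 0}

/-- A circuit walk: a sequence of points of `P` starting and ending at vertices,
each step a maximal step along a circuit direction. -/
def IsCircuitWalk {ι : Type*} (P : Set (ι → ℝ)) (Circ : (ι → ℝ) → Prop)
    {k : ℕ} (y : Fin (k + 1) → ι → ℝ) : Prop :=
  y 0 ∈ P.extremePoints ℝ ∧ y (Fin.last k) ∈ P.extremePoints ℝ ∧
  ∀ i : Fin k, y i.castSucc ∈ P ∧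
    ∃ (g : ι → ℝ) (α : ℝ), Circ g ∧ 0 < α ∧
      y i.succ = y i.castSucc + α • g ∧
      ∀ β : ℝ, α < β → y i.castSucc + β • g ∉ P

/-- A circuit walk is integral if all of its points have integer components. -/
def IsIntegralWalk {ι : Type*} {k : ℕ} (y : Fin (k + 1) → ι → ℝ) : Prop :=
  ∀ i p, ∃ z : ℤ, y i p = (z : ℝ)

/-- A circuit walk is a vertex walk if all of its points are vertices of `P`. -/
def IsVertexWalk {ι : Type*} (P : Set (ι → ℝ)) {k : ℕ} (y : Fin (k + 1) → ι → ℝ) : Prop :=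
  ∀ i, y i ∈ P.extremePoints ℝ

/-!
If a vector has integral row and column sums but some non-integral entries, then every row or
column meeting the set `S` of non-integral cells meets it at least twice, so `S` has at least as
many cells as it meets rows plus columns. The line sums of vectors supported on `S` satisfy one
linear relation, so a dimension count gives a nonzero vector with zero line sums supported on `S`.
At a vertex this contradicts extremality, so vertices are integral. For a circuit `g` with
`g p₀ ≠ 0`, applied to `g / g p₀` it contradicts support-minimality, so every entry is an integer
multiple of every nonzero entry, and the gcd condition makes the nonzero entries `±1`. A maximal
step from an integral point along such a circuit ends when an entry with coefficient `-1` reaches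
zero, so the step length is integral.

In the example, `x + g` is the midpoint of `x + g ± g'` for the basic move `g'` on the last two
rows and columns, so it is not a vertex, although `x, x + g, x + g + g'` is a circuit walk.
-/

open Finset Filter Topology

theorem two_mul_card_image_le_card {α β : Type*} [DecidableEq β] {f : α → β} {S : Finset α}
    (h : ∀ p ∈ S, ∃ q ∈ S, f q = f p ∧ q ≠ p) : 2 * #(S.image f) ≤ #S :=
  mul_card_image_le_card S 2 fun b hb => by
    obtain ⟨p, hp, rfl⟩ := mem_image.1 hb
    obtain ⟨q, hq, hqp, hne⟩ := h p hp
    exact one_lt_card.2 ⟨q, by simp [hq, hqp], p, by simp [hp], hne⟩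

section LineSums

variable {R C : Type*} [Fintype R] [Fintype C]

theorem exists_ne_zero_lineSums_eq_zero_of_forall_mates (S : Finset (R × C)) (hS : S.Nonempty)
    (hrow : ∀ p ∈ S, ∃ q ∈ S, q.1 = p.1 ∧ q ≠ p) (hcol : ∀ p ∈ S, ∃ q ∈ S, q.2 = p.2 ∧ q ≠ p) :
    ∃ w : R × C → ℝ, w ≠ 0 ∧ (∀ i, ∑ j, w (i, j) = 0) ∧ (∀ j, ∑ i, w (i, j) = 0) ∧
      ∀ p, w p ≠ 0 → p ∈ S := by
  classical
  obtain ⟨p₀, hp₀⟩ := hS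
  set rows := S.image Prod.fst
  set cols := (S.image Prod.snd).erase p₀.2
  have hrows : 2 * #rows ≤ #S := two_mul_card_image_le_card hrow
  have hcols : 2 * #(S.image Prod.snd) ≤ #S := two_mul_card_image_le_card hcol
  have hcard : #cols + 1 = #(S.image Prod.snd) :=
    card_erase_add_one (mem_image_of_mem _ hp₀)
  -- one column sum is left out: the row sums and the other column sums determine it
  let L : (R × C → ℝ) →ₗ[ℝ] (((Sᶜ : Finset (R × C)) → ℝ) × (rows → ℝ)) × (cols → ℝ) :=
    ((LinearMap.funLeft ℝ ℝ Subtype.val).prod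
      (LinearMap.pi fun r : rows => ∑ j, LinearMap.proj (r.1, j))).prod
      (LinearMap.pi fun c : cols => ∑ i, LinearMap.proj (i, c.1))
  have hdim : Module.finrank ℝ ((((Sᶜ : Finset (R × C)) → ℝ) × (rows → ℝ)) × (cols → ℝ)) <
      Module.finrank ℝ (R × C → ℝ) := by
    simp only [Module.finrank_prod, Module.finrank_fintype_fun_eq_card, Fintype.card_coe,
      card_compl]
    have := S.card_le_univ
    omega
  obtain ⟨w, hwL, hw0⟩ :=
    Submodule.exists_mem_ne_zero_of_ne_bot (LinearMap.ker_ne_bot_of_finrank_lt (f := L) hdim)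
  simp only [L, LinearMap.ker_prod, Submodule.mem_inf, LinearMap.mem_ker, funext_iff,
    LinearMap.funLeft_apply, Pi.zero_apply, Subtype.forall, mem_compl, Prod.forall,
    LinearMap.pi_apply, LinearMap.coe_sum, LinearMap.coe_proj, Finset.sum_apply,
    Function.eval] at hwL
  obtain ⟨⟨hout, hrows0⟩, hcols0⟩ := hwL
  have hsupp : ∀ p, w p ≠ 0 → p ∈ S := fun p hp => by_contra fun h => hp (hout p.1 p.2 h)
  have hrowSum : ∀ i, ∑ j, w (i, j) = 0 := by
    intro i
    by_cases hi : i ∈ rows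
    · exact hrows0 i hi
    · exact sum_eq_zero fun j _ => by_contra fun h => hi (mem_image_of_mem Prod.fst (hsupp _ h))
  have hcolSum : ∀ j ≠ p₀.2, ∑ i, w (i, j) = 0 := by
    intro j hj
    by_cases hc : j ∈ S.image Prod.snd
    · exact hcols0 j (mem_erase.2 ⟨hj, hc⟩)
    · exact sum_eq_zero fun i _ => by_contra fun h => hc (mem_image_of_mem Prod.snd (hsupp _ h))
  refine ⟨w, hw0, hrowSum, fun j => ?_, hsupp⟩
  obtain rfl | hj := eq_or_ne j p₀.2
  · calc ∑ i, w (i, p₀.2) = ∑ j, ∑ i, w (i, j) :=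
          (sum_eq_single _ (fun j _ hj => hcolSum j hj) (by simp)).symm
      _ = ∑ i, ∑ j, w (i, j) := sum_comm
      _ = 0 := sum_eq_zero fun i _ => hrowSum i
  · exact hcolSum j hj

theorem exists_ne_notMem_of_sum_mem {ι G : Type*} [Fintype ι] [AddCommGroup G]
    (H : AddSubgroup G) {f : ι → G} (hf : ∑ i, f i ∈ H) {a : ι} (ha : f a ∉ H) :
    ∃ b ≠ a, f b ∉ H := by
  classical
  by_contra! h
  have hrest : ∑ b ∈ univ.erase a, f b ∈ H := H.sum_mem fun b hb => h b (ne_of_mem_erase hb)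
  rw [← add_sum_erase univ f (mem_univ a)] at hf
  exact ha (by simpa using H.sub_mem hf hrest)

theorem exists_ne_zero_lineSums_eq_zero_of_notMem (H : AddSubgroup ℝ) {y : R × C → ℝ}
    (hr : ∀ i, ∑ j, y (i, j) ∈ H) (hc : ∀ j, ∑ i, y (i, j) ∈ H) (hy : ∃ p, y p ∉ H) :
    ∃ w : R × C → ℝ, w ≠ 0 ∧ (∀ i, ∑ j, w (i, j) = 0) ∧ (∀ j, ∑ i, w (i, j) = 0) ∧
      ∀ p, w p ≠ 0 → y p ∉ H := by
  classical
  obtain ⟨w, hw0, hwr, hwc, hw⟩ := exists_ne_zero_lineSums_eq_zero_of_forall_mates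
    {p | y p ∉ H} (by simpa [Finset.Nonempty] using hy)
    (fun p hp => by
      obtain ⟨j, hj, hyj⟩ := exists_ne_notMem_of_sum_mem H (hr p.1) (a := p.2) (by simpa using hp)
      exact ⟨(p.1, j), by simpa using hyj, rfl, fun h => hj (by rw [← h])⟩)
    (fun p hp => by
      obtain ⟨i, hi, hyi⟩ := exists_ne_notMem_of_sum_mem H (hc p.2) (a := p.1) (by simpa using hp)
      exact ⟨(i, p.2), by simpa using hyi, rfl, fun h => hi (by rw [← h])⟩)
  exact ⟨w, hw0, hwr, hwc, fun p hp => by simpa using hw p hp⟩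

end LineSums

theorem AddSubgroup.mem_zmultiples_one_iff {R : Type*} [Ring R] {x : R} :
    x ∈ AddSubgroup.zmultiples 1 ↔ ∃ z : ℤ, x = z := by
  simp [AddSubgroup.mem_zmultiples_iff, eq_comm]

namespace TransportationPolytope

variable {m n : ℕ} {u : Fin m → ℕ} {v : Fin n → ℕ} {y w : Fin m × Fin n → ℝ}

theorem add_smul_mem (hy : y ∈ TransportationPolytope u v) (hwr : ∀ i, ∑ j, w (i, j) = 0)
    (hwc : ∀ j, ∑ i, w (i, j) = 0) {t : ℝ} (ht : ∀ p, 0 ≤ y p + t * w p) :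
    y + t • w ∈ TransportationPolytope u v := by
  refine ⟨fun i => ?_, fun j => ?_, ht⟩ <;>
    simp [sum_add_distrib, ← mul_sum, hy.1, hy.2.1, hwr, hwc]

theorem mem_extremePoints_of_forall_eq (hy : y ∈ TransportationPolytope u v)
    (h : ∀ z ∈ TransportationPolytope u v, (∀ p, y p = 0 → z p = 0) → z = y) :
    y ∈ (TransportationPolytope u v).extremePoints ℝ := by
  refine ⟨hy, fun z₁ h₁ z₂ h₂ hseg => h z₁ h₁ fun p hp => ?_⟩
  obtain ⟨a, b, ha, hb, -, hab⟩ := hseg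
  have hsum : a * z₁ p + b * z₂ p = 0 := by simpa [hp] using congrFun hab p
  have : a * z₁ p = 0 := by nlinarith [h₁.2.2 p, h₂.2.2 p]
  exact (mul_eq_zero.1 this).resolve_left ha.ne'

theorem eq_zero_of_mem_extremePoints (hy : y ∈ (TransportationPolytope u v).extremePoints ℝ)
    (hwr : ∀ i, ∑ j, w (i, j) = 0) (hwc : ∀ j, ∑ i, w (i, j) = 0)
    (hpos : ∀ p, w p ≠ 0 → 0 < y p) : w = 0 := by
  have hnonneg : ∀ᶠ t in 𝓝 (0 : ℝ), ∀ p, 0 ≤ y p + t * w p := by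
    refine eventually_all.2 fun p => ?_
    obtain hp | hp := eq_or_ne (w p) 0
    · exact .of_forall fun t => by simpa [hp] using hy.1.2.2 p
    · have : Tendsto (fun t => y p + t * w p) (𝓝 0) (𝓝 (y p)) :=
        (continuous_const.add (continuous_id.mul continuous_const)).tendsto' _ _ (by simp)
      exact (this.eventually_const_lt (hpos p hp)).mono fun _ => le_of_lt
  have hneg := (continuous_neg.tendsto' (0 : ℝ) 0 neg_zero).eventually hnonneg
  obtain ⟨t, ⟨h₁, h₂⟩, ht⟩ :=
    (((hnonneg.and hneg).filter_mono nhdsWithin_le_nhds).and self_mem_nhdsWithin).exists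
      (f := 𝓝[≠] (0 : ℝ))
  have hseg : y ∈ openSegment ℝ (y + t • w) (y + (-t) • w) :=
    ⟨1 / 2, 1 / 2, by norm_num, by norm_num, by norm_num, by module⟩
  have := hy.2 (add_smul_mem hy.1 hwr hwc h₁) (add_smul_mem hy.1 hwr hwc h₂) hseg
  exact (smul_eq_zero.1 (add_eq_left.1 this)).resolve_left ht

theorem exists_int_eq_of_mem_extremePoints
    (hy : y ∈ (TransportationPolytope u v).extremePoints ℝ) (p : Fin m × Fin n) :
    ∃ z : ℤ, y p = z := by
  set H := AddSubgroup.zmultiples (1 : ℝ)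
  by_contra hp
  obtain ⟨w, hw0, hwr, hwc, hw⟩ := exists_ne_zero_lineSums_eq_zero_of_notMem H
    (fun i => AddSubgroup.mem_zmultiples_one_iff.2 ⟨u i, by simp [hy.1.1 i]⟩)
    (fun j => AddSubgroup.mem_zmultiples_one_iff.2 ⟨v j, by simp [hy.1.2.1 j]⟩)
    ⟨p, mt AddSubgroup.mem_zmultiples_one_iff.1 hp⟩
  refine hw0 (eq_zero_of_mem_extremePoints hy hwr hwc fun q hq => ?_)
  exact (hy.1.2.2 q).lt_of_ne fun h => hw q hq (h ▸ H.zero_mem)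

theorem exists_neg_eq_zero_of_forall_lt_notMem {g : Fin m × Fin n → ℝ} {α : ℝ}
    (hmem : y + α • g ∈ TransportationPolytope u v) (hgr : ∀ i, ∑ j, g (i, j) = 0)
    (hgc : ∀ j, ∑ i, g (i, j) = 0) (hmax : ∀ β, α < β → y + β • g ∉ TransportationPolytope u v) :
    ∃ p, g p < 0 ∧ y p + α * g p = 0 := by
  by_contra! hne
  have hnonneg : ∀ᶠ β in 𝓝[>] α, ∀ p, 0 ≤ y p + β * g p := by
    refine eventually_all.2 fun p => ?_
    have h0 : 0 ≤ y p + α * g p := by simpa using hmem.2.2 p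
    obtain hpos | hzero := h0.lt_or_eq
    · have : Tendsto (fun β => y p + β * g p) (𝓝[>] α) (𝓝 (y p + α * g p)) :=
        ((continuous_const.add (continuous_id.mul continuous_const)).tendsto α).mono_left
          nhdsWithin_le_nhds
      exact (this.eventually_const_lt hpos).mono fun _ => le_of_lt
    · have hg : 0 ≤ g p := not_lt.1 fun h => hne p h hzero.symm
      filter_upwards [self_mem_nhdsWithin] with β (hβ : α < β)
      nlinarith
  obtain ⟨β, hβ, hαβ⟩ := (hnonneg.and self_mem_nhdsWithin).exists
  refine hmax β hαβ ?_
  have hsplit : y + β • g = (y + α • g) + (β - α) • g := by module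
  rw [hsplit]
  exact add_smul_mem hmem hgr hgc fun p => by simpa [add_assoc, ← add_mul] using hβ p

end TransportationPolytope

namespace IsCircuitTP

variable {m n : ℕ} {g : Fin m × Fin n → ℝ}

theorem exists_int_mul (hg : IsCircuitTP g) {p₀ : Fin m × Fin n} (hp₀ : g p₀ ≠ 0)
    (p : Fin m × Fin n) : ∃ k : ℤ, g p = k * g p₀ := by
  obtain ⟨hr, hc, -, -, hmin⟩ := hg
  set H := AddSubgroup.zmultiples (1 : ℝ)
  by_contra! hp
  obtain ⟨w, hw0, hwr, hwc, hw⟩ := exists_ne_zero_lineSums_eq_zero_of_notMem H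
    (y := fun q => g q / g p₀)
    (fun i => by simp [← sum_div, hr i]) (fun j => by simp [← sum_div, hc j])
    ⟨p, fun hmem => by
      obtain ⟨k, hk⟩ := AddSubgroup.mem_zmultiples_one_iff.1 hmem
      exact hp k (by rw [← hk]; field_simp)⟩
  refine hmin ⟨w, hwr, hwc, hw0, (Set.ssubset_iff_of_subset fun q hq => ?_).2 ⟨p₀, ?_, ?_⟩⟩
  · simp only [Set.mem_ofPred_eq, neg_ne_zero] at hq ⊢
    exact fun hgq => hw q hq (by simp [hgq, H.zero_mem])
  · simpa using hp₀
  · simpa using not_imp_not.1 (hw p₀) (by rw [div_self hp₀]; exact AddSubgroup.mem_zmultiples 1)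

theorem abs_eq_one (hg : IsCircuitTP g) {p : Fin m × Fin n} (hp : g p ≠ 0) : |g p| = 1 := by
  obtain ⟨gz, hgz, hgcd⟩ := hg.2.2.2.1
  have hdvd : gz p ∣ 1 := hgcd ▸ dvd_gcd fun q _ => by
    obtain ⟨k, hk⟩ := hg.exists_int_mul hp q
    have : (gz q : ℝ) = gz p * k := by rw [← hgz, ← hgz, hk, mul_comm]
    exact ⟨k, by exact_mod_cast this⟩
  rw [hgz p, ← Int.cast_abs, Int.isUnit_iff_abs_eq.1 (isUnit_of_dvd_one hdvd), Int.cast_one]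

end IsCircuitTP

theorem IsCircuitWalk.mem {ι : Type*} {P : Set (ι → ℝ)} {Circ : (ι → ℝ) → Prop} {k : ℕ}
    {y : Fin (k + 1) → ι → ℝ} (hy : IsCircuitWalk P Circ y) (i : Fin (k + 1)) : y i ∈ P := by
  induction i using Fin.lastCases with
  | last => exact hy.2.1.1
  | cast i => exact (hy.2.2 i).1

theorem IsCircuitWalk.isIntegralWalk {m n k : ℕ} {u : Fin m → ℕ} {v : Fin n → ℕ}
    {y : Fin (k + 1) → Fin m × Fin n → ℝ}
    (hy : IsCircuitWalk (TransportationPolytope u v) IsCircuitTP y) : IsIntegralWalk y := by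
  intro i
  induction i using Fin.induction with
  | zero => exact TransportationPolytope.exists_int_eq_of_mem_extremePoints hy.1
  | succ i ih =>
    obtain ⟨-, g, α, hg, -, hstep, hmax⟩ := hy.2.2 i
    obtain ⟨p₀, hneg, hzero⟩ := TransportationPolytope.exists_neg_eq_zero_of_forall_lt_notMem
      (hstep ▸ hy.mem i.succ) hg.1 hg.2.1 hmax
    -- a circuit has entries in `{0, ±1}`, so the blocking entry forces `α = y p₀`
    have hg₀ : g p₀ = -1 := by
      have := hg.abs_eq_one hneg.ne
      rw [abs_of_neg hneg] at this
      linarith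
    obtain ⟨gz, hgz, -⟩ := hg.2.2.2.1
    obtain ⟨a, ha⟩ := ih p₀
    intro p
    obtain ⟨b, hb⟩ := ih p
    refine ⟨b + a * gz p, ?_⟩
    rw [hg₀] at hzero
    simp [hstep, hb, ← hgz, show α = a by linarith]

def basicMove (R : Type*) [Ring R] {m n : ℕ} (i i' : Fin m) (j j' : Fin n) :
    Fin m × Fin n → R :=
  fun p => (Pi.single i 1 - Pi.single i' 1 : Fin m → R) p.1 *
    (Pi.single j 1 - Pi.single j' 1 : Fin n → R) p.2

section BasicMove

variable {m n : ℕ} {i i' : Fin m} {j j' : Fin n}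

theorem eq_smul_basicMove (hi : i ≠ i') (hj : j ≠ j') {y : Fin m × Fin n → ℝ}
    (hr : ∀ i, ∑ j, y (i, j) = 0) (hc : ∀ j, ∑ i, y (i, j) = 0)
    (hsupp : ∀ p, y p ≠ 0 → basicMove ℝ i i' j j' p ≠ 0) :
    y = y (i, j) • basicMove ℝ i i' j j' := by
  have hzero : ∀ p, basicMove ℝ i i' j j' p = 0 → y p = 0 := fun p h =>
    by_contra fun h' => hsupp p h' h
  have hrow : y (i, j) + y (i, j') = 0 := by
    rw [← hr i, Fintype.sum_eq_add j j' hj fun c hc => hzero _ (by simp [basicMove, hc.1, hc.2])]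
  have hcol : y (i, j) + y (i', j) = 0 := by
    rw [← hc j, Fintype.sum_eq_add i i' hi fun r hr => hzero _ (by simp [basicMove, hr.1, hr.2])]
  have hcol' : y (i, j') + y (i', j') = 0 := by
    rw [← hc j', Fintype.sum_eq_add i i' hi fun r hr => hzero _ (by simp [basicMove, hr.1, hr.2])]
  ext ⟨r, c⟩
  by_cases hrc : basicMove ℝ i i' j j' (r, c) = 0
  · simp [hrc, hzero _ hrc]
  have hr : r = i ∨ r = i' := by
    by_contra! h
    simp [basicMove, h.1, h.2] at hrc
  have hc : c = j ∨ c = j' := by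
    by_contra! h
    simp [basicMove, h.1, h.2] at hrc
  rcases hr with rfl | rfl <;> rcases hc with rfl | rfl <;>
    simp [basicMove, hi, hj, hi.symm, hj.symm] <;> linarith

theorem isCircuitTP_basicMove (hi : i ≠ i') (hj : j ≠ j') :
    IsCircuitTP (basicMove ℝ i i' j j') := by
  refine ⟨fun r => ?_, fun c => ?_, fun h => ?_, ⟨basicMove ℤ i i' j j', fun p => ?_, ?_⟩, ?_⟩
  · simp [basicMove, ← mul_sum, sum_sub_distrib]
  · simp [basicMove, ← sum_mul, sum_sub_distrib]
  · simpa [basicMove, hi.symm, hj.symm] using congrFun h (i, j)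
  · simp [basicMove, Pi.single_apply]
  · rw [← Finset.normalize_gcd, normalize_eq_one]
    refine isUnit_of_dvd_one ?_
    simpa [basicMove, hi.symm, hj.symm] using gcd_dvd (f := basicMove ℤ i i' j j') (mem_univ (i, j))
  · rintro ⟨y, hyr, hyc, hy0, hsub⟩
    obtain ⟨p, hgp, hyp⟩ := Set.exists_of_ssubset hsub
    simp only [Set.mem_ofPred_eq, neg_ne_zero, not_not] at hgp hyp
    have hy := eq_smul_basicMove hi hj hyr hyc fun q hq => by simpa using hsub.1 (by simpa using hq)
    have hyij : y (i, j) = 0 := by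
      rw [hy] at hyp
      simpa [hgp] using hyp
    exact hy0 (by rw [hy, hyij, zero_smul])

end BasicMove

namespace Counterexample

abbrev P : Set (Fin 3 × Fin 3 → ℝ) := TransportationPolytope ![1, 2, 2] ![1, 2, 2]

def x : Fin 3 × Fin 3 → ℝ := fun p => !![0, 1, 0; 1, 0, 1; 0, 1, 1] p.1 p.2

def g : Fin 3 × Fin 3 → ℝ := fun p => !![1, -1, 0; -1, 1, 0; 0, 0, 0] p.1 p.2

def g' : Fin 3 × Fin 3 → ℝ := basicMove ℝ 1 2 1 2

def v : Fin 3 × Fin 3 → ℝ := fun p => !![1, 0, 0; 0, 2, 0; 0, 0, 2] p.1 p.2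

theorem g_eq_basicMove : g = basicMove ℝ 0 1 0 1 := by
  ext ⟨i, j⟩
  fin_cases i <;> fin_cases j <;> simp [g, basicMove]

theorem isCircuitTP_g : IsCircuitTP g := by
  rw [g_eq_basicMove]
  exact isCircuitTP_basicMove (by decide) (by decide)

theorem isCircuitTP_g' : IsCircuitTP g' := isCircuitTP_basicMove (by decide) (by decide)

theorem x_add_g_add_g' : x + g + g' = v := by
  ext ⟨i, j⟩
  fin_cases i <;> fin_cases j <;> simp [x, g, g', v, basicMove] <;> norm_num

theorem x_mem : x ∈ P := by
  simp [TransportationPolytope, Fin.forall_fin_succ, Fin.sum_univ_three, one_add_one_eq_two, x]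

theorem x_add_g_mem : x + g ∈ P := by
  simp [TransportationPolytope, Fin.forall_fin_succ, Fin.sum_univ_three, one_add_one_eq_two, x, g]

theorem v_mem : v ∈ P := by
  simp [TransportationPolytope, Fin.forall_fin_succ, Fin.sum_univ_three, v]

theorem lineSums_eq_of_mem {z : Fin 3 × Fin 3 → ℝ} (hz : z ∈ P) :
    z (0, 0) + z (0, 1) + z (0, 2) = 1 ∧ z (1, 0) + z (1, 1) + z (1, 2) = 2 ∧
    z (2, 0) + z (2, 1) + z (2, 2) = 2 ∧ z (0, 0) + z (1, 0) + z (2, 0) = 1 ∧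
    z (0, 1) + z (1, 1) + z (2, 1) = 2 ∧ z (0, 2) + z (1, 2) + z (2, 2) = 2 := by
  obtain ⟨hr, hc, -⟩ := hz
  simp only [Fin.sum_univ_three] at hr hc
  simp [hr, hc]

theorem x_mem_extremePoints : x ∈ P.extremePoints ℝ := by
  refine TransportationPolytope.mem_extremePoints_of_forall_eq x_mem fun z hz h => ?_
  obtain ⟨r₀, r₁, r₂, c₀, c₁, c₂⟩ := lineSums_eq_of_mem hz
  have h₀₀ := h (0, 0) (by simp [x])
  have h₀₂ := h (0, 2) (by simp [x])
  have h₁₁ := h (1, 1) (by simp [x])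
  have h₂₀ := h (2, 0) (by simp [x])
  ext ⟨i, j⟩
  fin_cases i <;> fin_cases j <;> simp [x] <;> linarith

theorem v_mem_extremePoints : v ∈ P.extremePoints ℝ := by
  refine TransportationPolytope.mem_extremePoints_of_forall_eq v_mem fun z hz h => ?_
  obtain ⟨r₀, r₁, r₂, c₀, c₁, c₂⟩ := lineSums_eq_of_mem hz
  have h₀₁ := h (0, 1) (by simp [v])
  have h₀₂ := h (0, 2) (by simp [v])
  have h₁₀ := h (1, 0) (by simp [v])
  have h₁₂ := h (1, 2) (by simp [v])
  have h₂₀ := h (2, 0) (by simp [v])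
  have h₂₁ := h (2, 1) (by simp [v])
  ext ⟨i, j⟩
  fin_cases i <;> fin_cases j <;> simp [v] <;> linarith

theorem x_add_g_notMem_extremePoints : x + g ∉ P.extremePoints ℝ := fun h =>
  isCircuitTP_g'.2.2.1 <| TransportationPolytope.eq_zero_of_mem_extremePoints h
    isCircuitTP_g'.1 isCircuitTP_g'.2.1 fun ⟨i, j⟩ hp => by
      fin_cases i <;> fin_cases j <;> simp [x, g, g', basicMove] at hp ⊢

theorem x_add_smul_g_notMem {β : ℝ} (hβ : 1 < β) : x + β • g ∉ P := fun h => by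
  have := h.2.2 (0, 1)
  simp [x, g] at this
  linarith

theorem x_add_g_add_smul_g'_notMem {β : ℝ} (hβ : 1 < β) : x + g + β • g' ∉ P := fun h => by
  have := h.2.2 (1, 2)
  simp [x, g, g', basicMove] at this
  linarith

theorem isCircuitWalk : IsCircuitWalk P IsCircuitTP ![x, x + g, v] := by
  refine ⟨x_mem_extremePoints, v_mem_extremePoints, Fin.forall_fin_two.2 ⟨?_, ?_⟩⟩
  · exact ⟨x_mem, g, 1, isCircuitTP_g, one_pos, by simp, fun _ => x_add_smul_g_notMem⟩
  · exact ⟨x_add_g_mem, g', 1, isCircuitTP_g', one_pos, by simp [← x_add_g_add_g'],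
      fun _ => x_add_g_add_smul_g'_notMem⟩

end Counterexample

theorem transportation_polytope_example :
    let P : Set (Fin 3 × Fin 3 → ℝ) := TransportationPolytope ![1, 2, 2] ![1, 2, 2]
    let x : Fin 3 × Fin 3 → ℝ := fun p => !![0, 1, 0; 1, 0, 1; 0, 1, 1] p.1 p.2
    let g : Fin 3 × Fin 3 → ℝ := fun p => !![1, -1, 0; -1, 1, 0; 0, 0, 0] p.1 p.2
    x ∈ P.extremePoints ℝ ∧
    IsCircuitTP g ∧
    x + (1 : ℝ) • g ∈ P ∧
    (∀ α : ℝ, 1 < α → x + α • g ∉ P) ∧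
    x + g ∉ P.extremePoints ℝ ∧
    (∀ (k : ℕ) (y : Fin (k + 1) → Fin 3 × Fin 3 → ℝ),
      IsCircuitWalk P IsCircuitTP y → IsIntegralWalk y) ∧
    ¬ (∀ (k : ℕ) (y : Fin (k + 1) → Fin 3 × Fin 3 → ℝ),
      IsCircuitWalk P IsCircuitTP y → IsVertexWalk P y) := by
  intro P x g
  open Counterexample in
  exact ⟨x_mem_extremePoints, isCircuitTP_g,
    by rw [one_smul]; exact x_add_g_mem, fun _ => x_add_smul_g_notMem, x_add_g_notMem_extremePoints,
    fun _ _ hy => hy.isIntegralWalk,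
    fun h => x_add_g_notMem_extremePoints (h 2 _ isCircuitWalk 1)⟩
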